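/- arXiv:2509.01852 — 2 statements merged into one kernel-verified Lean document; each statement's English description precedes it below -/
import Mathlib

section
/- Fix n ≥ 2 and k ≥ 2. Let D be any 2^n × 2^n diagonal unitary matrix belonging to level C_k of the n-qubit Clifford hierarchy, let H^(n) denote the Hadamard gate acting on qubit n only, and set ψ = S(n) · H^(n) · D · H^{⊗n} |0⟩^{⊗n}. For g = (g_1,…,g_n) ∈ {0,1}^n define U_g = (Z^{(1)}Z^{(2)})^{g_1} (Z^{(2)}Z^{(3)})^{g_2} ⋯ (Z^{(n−1)}Z^{(n)})^{g_{n−1}} (X^{⊗n})^{g_n}, and define the measurement unitary M_ψ = Σ_{g∈{0,1}^n} U_g |ψ⟩⟨g|, where {|g⟩} is the computational basis. Then M_ψ belongs to level C_k of the n-qubit Clifford hierarchy. -/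
open Matrix Complex

noncomputable section

/-- `n`-qubit operators: matrices indexed by bit strings (qubit `j` ↔ index `j`,
qubit 1 most significant corresponds to index `0`). -/
abbrev QMat (n : ℕ) := Matrix (Fin n → Fin 2) (Fin n → Fin 2) ℂ
/-- `n`-qubit state vectors. -/
abbrev QVec (n : ℕ) := (Fin n → Fin 2) → ℂ

def Xg : Matrix (Fin 2) (Fin 2) ℂ := !![0, 1; 1, 0]
def Yg : Matrix (Fin 2) (Fin 2) ℂ := !![0, -Complex.I; Complex.I, 0]
def Zg : Matrix (Fin 2) (Fin 2) ℂ := !![1, 0; 0, -1]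
def Hg : Matrix (Fin 2) (Fin 2) ℂ := (((Real.sqrt 2)⁻¹ : ℝ) : ℂ) • !![1, 1; 1, -1]

/-- Kronecker product of a family of single-qubit operators. -/
def kronFam (n : ℕ) (A : Fin n → Matrix (Fin 2) (Fin 2) ℂ) : QMat n :=
  fun v w => ∏ j, A j (v j) (w j)

/-- The single-qubit operator `A` acting on qubit `i` (identity elsewhere). -/
def onQubit (n : ℕ) (A : Matrix (Fin 2) (Fin 2) ℂ) (i : Fin n) : QMat n :=
  kronFam n (fun j => if j = i then A else 1)

/-- Controlled-NOT with control qubit `c` and target qubit `t`. -/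
def CNOT (n : ℕ) (c t : Fin n) : QMat n :=
  fun v w => if v = Function.update w t (w t + w c) then 1 else 0

/-- `S(n) = CNOT_{2→1} CNOT_{3→2} ⋯ CNOT_{n→n−1}` (0-based indices). -/
def Sn (n : ℕ) : QMat n :=
  ((List.finRange (n - 1)).map (fun j =>
    CNOT n ⟨j.1 + 1, by have := j.isLt; omega⟩ ⟨j.1, by have := j.isLt; omega⟩)).prod

/-- Computational basis vector `|g⟩`. -/
def ket (n : ℕ) (g : Fin n → Fin 2) : QVec n := fun v => if v = g then 1 else 0

/-- Inner product (conjugate-linear in the first argument). -/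
def qip {n : ℕ} (v w : QVec n) : ℂ := ∑ x, star (v x) * w x

/-- The generator `Z^{(j)} Z^{(j+1)}` (0-based `j`). -/
def ZZ (n : ℕ) (j : Fin (n - 1)) : QMat n :=
  onQubit n Zg ⟨j.1, by have := j.isLt; omega⟩ *
    onQubit n Zg ⟨j.1 + 1, by have := j.isLt; omega⟩

/-- `X^{⊗n}`. -/
def XXn (n : ℕ) : QMat n := kronFam n (fun _ => Xg)

/-- `U_g = (Z⁽¹⁾Z⁽²⁾)^{g₁} ⋯ (Z⁽ⁿ⁻¹⁾Z⁽ⁿ⁾)^{g_{n−1}} (X^{⊗n})^{g_n}`. -/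
def Ug (n : ℕ) (hn : 0 < n) (g : Fin n → Fin 2) : QMat n :=
  ((List.finRange (n - 1)).map (fun j =>
    ZZ n j ^ ((g (Fin.castLE (Nat.sub_le n 1) j)).val))).prod *
    XXn n ^ ((g ⟨n - 1, by omega⟩).val)

/-- The group `G⁽ⁿ⁾_tetra` generated by the `Z⁽ⁱ⁾Z⁽ⁱ⁺¹⁾` and `X^{⊗n}`
(all generators are involutions, so the multiplicative closure is a group). -/
def Gtetra (n : ℕ) : Submonoid (QMat n) :=
  Submonoid.closure ({ M | ∃ j : Fin (n - 1), M = ZZ n j } ∪ {XXn n})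

/-- `n`-fold Kronecker products of `I, X, Y, Z`. -/
def PauliSet (n : ℕ) : Set (QMat n) :=
  { M | ∃ A : Fin n → Matrix (Fin 2) (Fin 2) ℂ,
      (∀ j, A j = 1 ∨ A j = Xg ∨ A j = Yg ∨ A j = Zg) ∧ M = kronFam n A }

/-- The `n`-qubit Pauli group (every element has finite order, so the
multiplicative closure coincides with the generated group of unitaries). -/
def PauliGroup (n : ℕ) : Submonoid (QMat n) := Submonoid.closure (PauliSet n)

/-- Level `k` of the Clifford hierarchy: `C_1` is the Pauli group and
`C_{k+1} = { unitary U | ∀ P ∈ P_n, U P U† ∈ C_k }`. -/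
def Clifford (n : ℕ) : ℕ → Set (QMat n)
  | 0 => (PauliGroup n : Set (QMat n))
  | 1 => (PauliGroup n : Set (QMat n))
  | (k + 2) => { U | U ∈ Matrix.unitaryGroup (Fin n → Fin 2) ℂ ∧
      ∀ P ∈ PauliGroup n, U * P * Uᴴ ∈ Clifford n (k + 1) }

end

/-!
Conjugation by `C = S(n) H⁽ⁿ⁾` turns `U_g` into the `Z`-type Pauli `Z^g`: moving the CNOT
ladder `S(n)` past `Z⁽ʲ⁾Z⁽ʲ⁺¹⁾` leaves `Z⁽ʲ⁾`, moving it past `X^{⊗n}` leaves `X⁽ⁿ⁾`, and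
`H⁽ⁿ⁾` turns `X⁽ⁿ⁾` into `Z⁽ⁿ⁾`. As `Z^g` commutes with the diagonal `D` and
`Z^g H^{⊗n} |0⟩ = H^{⊗n} |g⟩`, the `g`-th column of `M_ψ` is `C D H^{⊗n} |g⟩`, i.e.
`M_ψ = C D H^{⊗n}`. Finally, each level `C_k` with `k ≥ 2` is stable under multiplication on
either side by unitaries normalising the Pauli group, and `S(n)`, `H⁽ⁿ⁾`, `H^{⊗n}` are such.
-/

noncomputable section

variable {n : ℕ}

theorem SemiconjBy.list_prod_map {M ι : Type*} [Monoid M] {a : M} {f g : ι → M} :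
    ∀ l : List ι, (∀ i ∈ l, SemiconjBy a (f i) (g i)) →
      SemiconjBy a (l.map f).prod (l.map g).prod
  | [], _ => by simp
  | i :: l, h => by
    simpa using (h i (by simp)).mul_right (list_prod_map l fun j hj => h j (by simp [hj]))

theorem semiconjBy_list_prod_finRange {M : Type*} [Monoid M] :
    ∀ {m : ℕ} (F : Fin m → M) (A : ℕ → M), (∀ i : Fin m, SemiconjBy (F i) (A (i + 1)) (A i)) →
      SemiconjBy ((List.finRange m).map F).prod (A m) (A 0)
  | 0, _, _, _ => by simp
  | m + 1, F, A, h => by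
    rw [List.finRange_succ, List.map_cons, List.map_map, List.prod_cons]
    exact (h 0).mul_left (semiconjBy_list_prod_finRange (F ∘ Fin.succ) (fun i => A (i + 1))
      fun i => h i.succ)

theorem semiconjBy_of_mul_self_eq_one {M : Type*} [Monoid M] {c : M} (hc : c * c = 1) (x : M) :
    SemiconjBy c (c * x * c) x := by
  rw [SemiconjBy, ← mul_assoc, ← mul_assoc, hc, one_mul]

theorem list_sum_single_castLE_add_single_last {M : Type*} [AddCommMonoid M] (hn : 0 < n)
    (g : Fin n → M) :
    ((List.finRange (n - 1)).map fun j =>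
        Pi.single (Fin.castLE (Nat.sub_le n 1) j) (g (Fin.castLE (Nat.sub_le n 1) j))).sum +
      Pi.single ⟨n - 1, by omega⟩ (g ⟨n - 1, by omega⟩) = g := by
  obtain ⟨m, rfl⟩ := Nat.exists_eq_add_one_of_ne_zero hn.ne'
  rw [← Fin.sum_univ_def]
  conv_rhs => rw [← Finset.univ_sum_single g, Fin.sum_univ_castSucc]
  rfl

theorem kronFam_mul (A B : Fin n → Matrix (Fin 2) (Fin 2) ℂ) :
    kronFam n A * kronFam n B = kronFam n (fun j => A j * B j) := by
  ext v w
  simp only [Matrix.mul_apply, kronFam, ← Finset.prod_mul_distrib]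
  rw [Finset.prod_univ_sum, Fintype.piFinset_univ]

theorem kronFam_one : kronFam n (fun _ => 1) = 1 := by
  ext v w
  simp only [kronFam, Matrix.one_apply, Finset.prod_ite_zero, Finset.prod_const_one,
    Finset.mem_univ, forall_const, funext_iff]

theorem kronFam_conjTranspose (A : Fin n → Matrix (Fin 2) (Fin 2) ℂ) :
    (kronFam n A)ᴴ = kronFam n (fun j => (A j)ᴴ) := by
  ext v w
  simp [kronFam, Matrix.conjTranspose_apply]

theorem kronFam_smul (c : Fin n → ℂ) (A : Fin n → Matrix (Fin 2) (Fin 2) ℂ) :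
    kronFam n (fun j => c j • A j) = (∏ j, c j) • kronFam n A := by
  ext v w
  simp [kronFam, Finset.prod_mul_distrib]

theorem kronFam_mem_unitaryGroup (A : Fin n → Matrix (Fin 2) (Fin 2) ℂ)
    (hA : ∀ j, A j ∈ unitaryGroup (Fin 2) ℂ) :
    kronFam n A ∈ unitaryGroup (Fin n → Fin 2) ℂ := by
  rw [mem_unitaryGroup_iff, star_eq_conjTranspose, kronFam_conjTranspose, kronFam_mul]
  simp_rw [← star_eq_conjTranspose, mem_unitaryGroup_iff.mp (hA _), kronFam_one]

theorem onQubit_mul (A B : Matrix (Fin 2) (Fin 2) ℂ) (i : Fin n) :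
    onQubit n A i * onQubit n B i = onQubit n (A * B) i := by
  rw [onQubit, onQubit, kronFam_mul]
  congr 1; funext j; split_ifs <;> simp

theorem onQubit_one (i : Fin n) : onQubit n 1 i = 1 := by
  simp [onQubit, kronFam_one]

theorem onQubit_pow (A : Matrix (Fin 2) (Fin 2) ℂ) (i : Fin n) (k : ℕ) :
    onQubit n A i ^ k = onQubit n (A ^ k) i := by
  induction k with
  | zero => simp [onQubit_one]
  | succ k ih => rw [pow_succ, ih, onQubit_mul, pow_succ]

theorem onQubit_smul (c : ℂ) (A : Matrix (Fin 2) (Fin 2) ℂ) (i : Fin n) :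
    onQubit n (c • A) i = c • onQubit n A i := by
  have : (fun j => if j = i then c • A else 1) =
      fun j => (if j = i then c else 1) • (if j = i then A else 1) := by
    funext j; split_ifs <;> simp
  rw [onQubit, this, kronFam_smul, Finset.prod_ite_eq']
  simp [onQubit]

theorem onQubit_commute (A B : Matrix (Fin 2) (Fin 2) ℂ) {i i' : Fin n} (h : i ≠ i') :
    Commute (onQubit n A i) (onQubit n B i') := by
  rw [Commute, SemiconjBy, onQubit, onQubit, kronFam_mul, kronFam_mul]
  congr 1; funext j
  by_cases hi : j = i
  · simp [hi, h]
  · split_ifs <;> simp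

theorem onQubit_pow_val (A : Matrix (Fin 2) (Fin 2) ℂ) (i : Fin n) (e : Fin 2) :
    onQubit n (A ^ e.val) i =
      kronFam n (fun j => A ^ ((Pi.single i e : Fin n → Fin 2) j).val) := by
  rw [onQubit]
  congr 1; funext j
  by_cases hj : j = i
  · subst hj; simp
  · simp [hj]

theorem semiconjBy_onQubit {A B C : Matrix (Fin 2) (Fin 2) ℂ} (h : SemiconjBy A B C) (i : Fin n) :
    SemiconjBy (onQubit n A i) (onQubit n B i) (onQubit n C i) := by
  rw [SemiconjBy, onQubit_mul, onQubit_mul, h.eq]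

def signChar : AddChar (Fin 2) ℂ where
  toFun x := (-1) ^ x.val
  map_zero_eq_one' := rfl
  map_add_eq_mul' := by intro a b; fin_cases a <;> fin_cases b <;> simp

theorem signChar_apply (x : Fin 2) : signChar x = (-1) ^ x.val := rfl

theorem signChar_sum {ι : Type*} (s : Finset ι) (f : ι → Fin 2) :
    signChar (∑ i ∈ s, f i) = ∏ i ∈ s, signChar (f i) := by
  classical
  induction s using Finset.induction_on with
  | empty => simp
  | insert a s ha ih =>
    rw [Finset.sum_insert ha, Finset.prod_insert ha, AddChar.map_add_eq_mul, ih]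

/-- The `X`-type Pauli `X^a = ⊗ⱼ X^{aⱼ}`. -/
def xShift (a : Fin n → Fin 2) : QMat n := fun v w => if v = w + a then 1 else 0

/-- The `Z`-type Pauli `Z^b = ⊗ⱼ Z^{bⱼ}`. -/
def zPhase (b : Fin n → Fin 2) : QMat n := diagonal fun v => signChar (b ⬝ᵥ v)

theorem zPhase_add (b b' : Fin n → Fin 2) : zPhase (b + b') = zPhase b * zPhase b' := by
  simp only [zPhase, diagonal_mul_diagonal, add_dotProduct, AddChar.map_add_eq_mul]

theorem zPhase_zero : zPhase (0 : Fin n → Fin 2) = 1 := by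
  simp [zPhase]

theorem zPhase_list_sum {ι : Type*} (f : ι → Fin n → Fin 2) (l : List ι) :
    (l.map fun i => zPhase (f i)).prod = zPhase (l.map f).sum := by
  induction l with
  | nil => simp [zPhase_zero]
  | cons a l ih => simp [ih, zPhase_add]

theorem Xg_pow_val_apply (a p q : Fin 2) : (Xg ^ a.val) p q = if p = q + a then 1 else 0 := by
  fin_cases a <;> fin_cases p <;> fin_cases q <;> simp [Xg]

theorem Zg_pow_val_apply (b p q : Fin 2) :
    (Zg ^ b.val) p q = if p = q then signChar (b * p) else 0 := by
  fin_cases b <;> fin_cases p <;> fin_cases q <;> simp [Zg, signChar_apply]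

theorem kronFam_Xg_pow (a : Fin n → Fin 2) : kronFam n (fun j => Xg ^ (a j).val) = xShift a := by
  ext v w
  simp only [kronFam, xShift, Xg_pow_val_apply, Finset.prod_ite_zero, Finset.prod_const_one,
    Finset.mem_univ, forall_const, funext_iff, Pi.add_apply]

theorem kronFam_Zg_pow (b : Fin n → Fin 2) : kronFam n (fun j => Zg ^ (b j).val) = zPhase b := by
  ext v w
  simp only [kronFam, zPhase, Zg_pow_val_apply, Finset.prod_ite_zero, Finset.mem_univ,
    forall_const, diagonal_apply, ← funext_iff, dotProduct, signChar_sum]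

theorem onQubit_Zg_pow (i : Fin n) (e : Fin 2) :
    onQubit n Zg i ^ e.val = zPhase (Pi.single i e) := by
  rw [onQubit_pow, onQubit_pow_val, kronFam_Zg_pow]

theorem onQubit_Xg_pow (i : Fin n) (e : Fin 2) :
    onQubit n Xg i ^ e.val = xShift (Pi.single i e) := by
  rw [onQubit_pow, onQubit_pow_val, kronFam_Xg_pow]

theorem XXn_eq_xShift : XXn n = xShift 1 := by
  rw [← kronFam_Xg_pow]
  simp [XXn]

theorem ZZ_eq_zPhase (j : Fin (n - 1)) :
    ZZ n j = zPhase (Pi.single ⟨j, by omega⟩ 1 + Pi.single ⟨j + 1, by omega⟩ 1) := by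
  rw [zPhase_add, ← onQubit_Zg_pow, ← onQubit_Zg_pow]
  simp [ZZ]

theorem xShift_mem_pauliSet (a : Fin n → Fin 2) : xShift a ∈ PauliSet n := by
  refine ⟨_, fun j => ?_, (kronFam_Xg_pow a).symm⟩
  generalize a j = x
  fin_cases x <;> simp

theorem zPhase_mem_pauliSet (b : Fin n → Fin 2) : zPhase b ∈ PauliSet n := by
  refine ⟨_, fun j => ?_, (kronFam_Zg_pow b).symm⟩
  generalize b j = x
  fin_cases x <;> simp

theorem onQubit_Zg_eq_zPhase (i : Fin n) : onQubit n Zg i = zPhase (Pi.single i 1) := by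
  simpa using onQubit_Zg_pow i 1

theorem onQubit_Xg_eq_xShift (i : Fin n) : onQubit n Xg i = xShift (Pi.single i 1) := by
  simpa using onQubit_Xg_pow i 1

theorem I_smul_one_mem_pauliGroup (hn : 0 < n) : I • (1 : QMat n) ∈ PauliGroup n := by
  have hXYZ : Xg * Yg * Zg = I • 1 := by
    ext i j; fin_cases i <;> fin_cases j <;> simp [Xg, Yg, Zg, Matrix.mul_apply]
  have mem : ∀ A, (A = 1 ∨ A = Xg ∨ A = Yg ∨ A = Zg) → onQubit n A ⟨0, hn⟩ ∈ PauliGroup n :=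
    fun A hA => Submonoid.subset_closure ⟨_, fun j => by split_ifs <;> tauto, rfl⟩
  have := mul_mem (mul_mem (mem Xg (by tauto)) (mem Yg (by tauto))) (mem Zg (by tauto))
  rwa [onQubit_mul, onQubit_mul, hXYZ, onQubit_smul, onQubit_one] at this

theorem smul_mem_pauliGroup (hn : 0 < n) {c : ℂ} (hc : c ∈ Submonoid.powers I) {P : QMat n}
    (hP : P ∈ PauliGroup n) : c • P ∈ PauliGroup n := by
  have : Submonoid.powers I ≤ (PauliGroup n).comap (algebraMap ℂ (QMat n) : ℂ →* QMat n) :=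
    Submonoid.powers_le.mpr <| by
      simpa [Algebra.algebraMap_eq_smul_one] using I_smul_one_mem_pauliGroup hn
  rw [← smul_one_mul]
  exact mul_mem (by simpa [Algebra.algebraMap_eq_smul_one] using this hc) hP

def IsPhasedPauli (A : Matrix (Fin 2) (Fin 2) ℂ) : Prop :=
  ∃ c ∈ Submonoid.powers I, ∃ B, (B = 1 ∨ B = Xg ∨ B = Yg ∨ B = Zg) ∧ A = c • B

theorem kronFam_mem_pauliGroup (hn : 0 < n) {F : Fin n → Matrix (Fin 2) (Fin 2) ℂ}
    (hF : ∀ j, IsPhasedPauli (F j)) : kronFam n F ∈ PauliGroup n := by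
  choose c hc B hB hFB using hF
  rw [funext hFB, kronFam_smul]
  exact smul_mem_pauliGroup hn (prod_mem fun j _ => hc j) (Submonoid.subset_closure ⟨B, hB, rfl⟩)

theorem exists_eq_smul_xShift_mul_zPhase {P : QMat n} (hP : P ∈ PauliSet n) :
    ∃ c ∈ Submonoid.powers I, ∃ a b : Fin n → Fin 2, P = c • (xShift a * zPhase b) := by
  obtain ⟨A, hA, rfl⟩ := hP
  have h1 : ∀ j, ∃ c ∈ Submonoid.powers I, ∃ a b : Fin 2,
      A j = c • (Xg ^ a.val * Zg ^ b.val) := by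
    intro j
    rcases hA j with h | h | h | h <;> rw [h]
    · exact ⟨1, one_mem _, 0, 0, by simp⟩
    · exact ⟨1, one_mem _, 1, 0, by simp⟩
    · refine ⟨I, Submonoid.mem_powers I, 1, 1, ?_⟩
      ext p q; fin_cases p <;> fin_cases q <;> simp [Xg, Yg, Zg]
    · exact ⟨1, one_mem _, 0, 1, by simp⟩
  choose c hc a b hAj using h1
  refine ⟨∏ j, c j, prod_mem fun j _ => hc j, a, b, ?_⟩
  rw [← kronFam_Xg_pow, ← kronFam_Zg_pow, kronFam_mul, ← kronFam_smul, funext hAj]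

def pauliNormalizer (n : ℕ) : Submonoid (QMat n) where
  carrier := {V | V ∈ unitaryGroup (Fin n → Fin 2) ℂ ∧
    ∀ P ∈ PauliGroup n, V * P * Vᴴ ∈ PauliGroup n ∧ Vᴴ * P * V ∈ PauliGroup n}
  mul_mem' := by
    rintro V W ⟨hVu, hV⟩ ⟨hWu, hW⟩
    refine ⟨mul_mem hVu hWu, fun P hP => ⟨?_, ?_⟩⟩
    · simpa only [conjTranspose_mul, mul_assoc] using (hV _ (hW P hP).1).1
    · simpa only [conjTranspose_mul, mul_assoc] using (hW _ (hV P hP).2).2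
  one_mem' := ⟨one_mem _, fun P hP => by simpa using hP⟩

theorem conj_mem_pauliGroup {V : QMat n} (hV : V ∈ unitaryGroup (Fin n → Fin 2) ℂ)
    (hgen : ∀ P ∈ PauliSet n, V * P * Vᴴ ∈ PauliGroup n) {P : QMat n}
    (hP : P ∈ PauliGroup n) : V * P * Vᴴ ∈ PauliGroup n :=
  (Submonoid.closure_le (S := (PauliGroup n).comap
    (Unitary.conjStarAlgAut ℂ (QMat n) ⟨V, hV⟩ : QMat n →* QMat n))).mpr hgen hP

theorem mem_pauliNormalizer_of_conjTranspose_eq_self {V : QMat n}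
    (hVu : V ∈ unitaryGroup (Fin n → Fin 2) ℂ) (hV : Vᴴ = V)
    (hgen : ∀ P ∈ PauliSet n, V * P * V ∈ PauliGroup n) : V ∈ pauliNormalizer n := by
  have hgen' : ∀ P ∈ PauliSet n, V * P * Vᴴ ∈ PauliGroup n := by rwa [hV]
  refine ⟨hVu, fun P hP => ⟨conj_mem_pauliGroup hVu hgen' hP, ?_⟩⟩
  simpa only [hV] using conj_mem_pauliGroup hVu hgen' hP

theorem conj_mem_clifford {V : QMat n} (hV : V ∈ pauliNormalizer n) :
    ∀ k, ∀ U ∈ Clifford n k, V * U * Vᴴ ∈ Clifford n k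
  | 0, U, hU => (hV.2 U hU).1
  | 1, U, hU => (hV.2 U hU).1
  | k + 2, U, ⟨hUu, hUP⟩ => by
    have hVu : V ∈ unitaryGroup (Fin n → Fin 2) ℂ := hV.1
    have hVu' : Vᴴ ∈ unitaryGroup (Fin n → Fin 2) ℂ := Unitary.star_mem hVu
    refine ⟨mul_mem (mul_mem hVu hUu) hVu', fun P hP => ?_⟩
    have := conj_mem_clifford hV (k + 1) _ (hUP _ (hV.2 P hP).2)
    simpa only [conjTranspose_mul, conjTranspose_conjTranspose, mul_assoc] using this

theorem mul_mem_clifford_left {V U : QMat n} {k : ℕ} (hV : V ∈ pauliNormalizer n)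
    (hU : U ∈ Clifford n (k + 2)) : V * U ∈ Clifford n (k + 2) := by
  refine ⟨mul_mem hV.1 hU.1, fun P hP => ?_⟩
  simpa only [conjTranspose_mul, mul_assoc] using conj_mem_clifford hV (k + 1) _ (hU.2 P hP)

theorem mul_mem_clifford_right {U V : QMat n} {k : ℕ} (hU : U ∈ Clifford n (k + 2))
    (hV : V ∈ pauliNormalizer n) : U * V ∈ Clifford n (k + 2) := by
  refine ⟨mul_mem hU.1 hV.1, fun P hP => ?_⟩
  simpa only [conjTranspose_mul, mul_assoc] using hU.2 _ (hV.2 P hP).1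

theorem Hg_conjTranspose : Hgᴴ = Hg := by
  ext i j
  fin_cases i <;> fin_cases j <;> simp [Hg, conjTranspose_apply, Complex.conj_ofReal]

theorem Hg_mul_mul_Hg_of {A B : Matrix (Fin 2) (Fin 2) ℂ}
    (h : !![1, 1; 1, -1] * A * !![1, 1; 1, -1] = (2 : ℂ) • B) : Hg * A * Hg = B := by
  have hs : (((Real.sqrt 2)⁻¹ : ℝ) : ℂ) * (((Real.sqrt 2)⁻¹ : ℝ) : ℂ) = 1 / 2 := by
    rw [← Complex.ofReal_mul, ← mul_inv, Real.mul_self_sqrt (by norm_num)]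
    norm_num
  rw [Hg, Matrix.smul_mul, Matrix.smul_mul, Matrix.mul_smul, smul_smul, h, smul_smul, hs]
  norm_num

theorem Hg_mul_Hg : Hg * Hg = 1 := by
  simpa using Hg_mul_mul_Hg_of (A := 1) (B := 1) (by ext i j; fin_cases i <;> fin_cases j <;>
    simp [Matrix.mul_apply] <;> norm_num)

theorem Hg_mul_Xg_mul_Hg : Hg * Xg * Hg = Zg :=
  Hg_mul_mul_Hg_of <| by
    ext i j; fin_cases i <;> fin_cases j <;> simp [Xg, Zg, Matrix.mul_apply] <;> norm_num

theorem Hg_mul_Yg_mul_Hg : Hg * Yg * Hg = (-1 : ℂ) • Yg :=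
  Hg_mul_mul_Hg_of <| by
    ext i j; fin_cases i <;> fin_cases j <;> simp [Yg, Matrix.mul_apply] <;> ring

theorem Hg_mul_Zg_mul_Hg : Hg * Zg * Hg = Xg :=
  Hg_mul_mul_Hg_of <| by
    ext i j; fin_cases i <;> fin_cases j <;> simp [Xg, Zg, Matrix.mul_apply] <;> norm_num

theorem semiconjBy_Hg_Zg_Xg : SemiconjBy Hg Zg Xg := by
  rw [SemiconjBy, ← Hg_mul_Zg_mul_Hg, mul_assoc _ Hg, Hg_mul_Hg, mul_one]

theorem isPhasedPauli_Hg_mul_mul_Hg {B : Matrix (Fin 2) (Fin 2) ℂ}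
    (hB : B = 1 ∨ B = Xg ∨ B = Yg ∨ B = Zg) : IsPhasedPauli (Hg * B * Hg) := by
  rcases hB with rfl | rfl | rfl | rfl
  · exact ⟨1, one_mem _, 1, by tauto, by simp [Hg_mul_Hg]⟩
  · exact ⟨1, one_mem _, Zg, by tauto, by simp [Hg_mul_Xg_mul_Hg]⟩
  · exact ⟨-1, ⟨2, by simp⟩, Yg, by tauto, Hg_mul_Yg_mul_Hg⟩
  · exact ⟨1, one_mem _, Xg, by tauto, by simp [Hg_mul_Zg_mul_Hg]⟩

theorem kronFam_mem_pauliNormalizer (hn : 0 < n) {E : Fin n → Matrix (Fin 2) (Fin 2) ℂ}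
    (hE : ∀ j, E j = Hg ∨ E j = 1) : kronFam n E ∈ pauliNormalizer n := by
  have hEsa : ∀ j, (E j)ᴴ = E j := fun j => by
    rcases hE j with h | h <;> simp [h, Hg_conjTranspose]
  have hEu : ∀ j, E j ∈ unitaryGroup (Fin 2) ℂ := fun j => by
    rw [mem_unitaryGroup_iff, star_eq_conjTranspose, hEsa]
    rcases hE j with h | h <;> simp [h, Hg_mul_Hg]
  refine mem_pauliNormalizer_of_conjTranspose_eq_self (kronFam_mem_unitaryGroup E hEu)
    (by rw [kronFam_conjTranspose, funext hEsa]) ?_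
  rintro _ ⟨A, hA, rfl⟩
  rw [kronFam_mul, kronFam_mul]
  refine kronFam_mem_pauliGroup hn fun j => ?_
  rcases hE j with h | h <;> rw [h]
  · exact isPhasedPauli_Hg_mul_mul_Hg (hA j)
  · exact ⟨1, one_mem _, A j, hA j, by simp⟩

theorem onQubit_Hg_mem_pauliNormalizer (hn : 0 < n) (i : Fin n) :
    onQubit n Hg i ∈ pauliNormalizer n :=
  kronFam_mem_pauliNormalizer hn fun j => by split_ifs <;> simp

def cnotMap (c t : Fin n) (w : Fin n → Fin 2) : Fin n → Fin 2 := w + Pi.single t (w c)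

theorem CNOT_apply (c t : Fin n) (v w : Fin n → Fin 2) :
    CNOT n c t v w = if v = cnotMap c t w then 1 else 0 := by
  have : Function.update w t (w t + w c) = cnotMap c t w := by
    funext j
    by_cases hj : j = t
    · subst hj; simp [cnotMap]
    · simp [cnotMap, hj]
  rw [CNOT, this]

theorem cnotMap_add (c t : Fin n) (v w : Fin n → Fin 2) :
    cnotMap c t (v + w) = cnotMap c t v + cnotMap c t w := by
  simp only [cnotMap, Pi.add_apply, Pi.single_add]
  abel

theorem cnotMap_involutive {c t : Fin n} (hct : c ≠ t) : Function.Involutive (cnotMap c t) := by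
  intro w
  have h2 : ∀ x : Fin 2, x + x = 0 := by decide
  simp only [cnotMap, Pi.add_apply, Pi.single_eq_of_ne hct, add_zero, add_assoc, ← Pi.single_add,
    h2, Pi.single_zero]

theorem dotProduct_cnotMap (c t : Fin n) (b v : Fin n → Fin 2) :
    b ⬝ᵥ cnotMap c t v = cnotMap t c b ⬝ᵥ v := by
  simp only [cnotMap, dotProduct_add, add_dotProduct, dotProduct_single, single_dotProduct]

theorem eq_cnotMap_comm {c t : Fin n} (hct : c ≠ t) (v w : Fin n → Fin 2) :
    v = cnotMap c t w ↔ w = cnotMap c t v :=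
  ⟨fun h => by rw [h, cnotMap_involutive hct], fun h => by rw [h, cnotMap_involutive hct]⟩

theorem CNOT_mul_mul_CNOT_apply {c t : Fin n} (hct : c ≠ t) (M : QMat n) (v w : Fin n → Fin 2) :
    (CNOT n c t * M * CNOT n c t) v w = M (cnotMap c t v) (cnotMap c t w) := by
  simp [Matrix.mul_apply, CNOT_apply, eq_cnotMap_comm hct v]

theorem CNOT_conjTranspose {c t : Fin n} (hct : c ≠ t) : (CNOT n c t)ᴴ = CNOT n c t := by
  ext v w
  simp [conjTranspose_apply, CNOT_apply, eq_cnotMap_comm hct w v]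

theorem CNOT_mul_CNOT {c t : Fin n} (hct : c ≠ t) : CNOT n c t * CNOT n c t = 1 := by
  have h : CNOT n c t * 1 * CNOT n c t = 1 := by
    ext v w
    simp only [CNOT_mul_mul_CNOT_apply hct, one_apply, (cnotMap_involutive hct).injective.eq_iff]
  rwa [mul_one] at h

theorem CNOT_mul_xShift_mul_CNOT {c t : Fin n} (hct : c ≠ t) (a : Fin n → Fin 2) :
    CNOT n c t * xShift a * CNOT n c t = xShift (cnotMap c t a) := by
  ext v w
  rw [CNOT_mul_mul_CNOT_apply hct, xShift, xShift]
  refine if_congr ⟨fun h => ?_, fun h => ?_⟩ rfl rfl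
  · rw [← cnotMap_involutive hct v, h, cnotMap_add, cnotMap_involutive hct]
  · rw [h, cnotMap_add, cnotMap_involutive hct]

theorem CNOT_mul_zPhase_mul_CNOT {c t : Fin n} (hct : c ≠ t) (b : Fin n → Fin 2) :
    CNOT n c t * zPhase b * CNOT n c t = zPhase (cnotMap t c b) := by
  ext v w
  simp only [CNOT_mul_mul_CNOT_apply hct, zPhase, diagonal_apply, dotProduct_cnotMap,
    (cnotMap_involutive hct).injective.eq_iff]

theorem CNOT_mem_pauliNormalizer (hn : 0 < n) {c t : Fin n} (hct : c ≠ t) :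
    CNOT n c t ∈ pauliNormalizer n := by
  have hu : CNOT n c t ∈ unitaryGroup (Fin n → Fin 2) ℂ := by
    rw [mem_unitaryGroup_iff, star_eq_conjTranspose, CNOT_conjTranspose hct, CNOT_mul_CNOT hct]
  refine mem_pauliNormalizer_of_conjTranspose_eq_self hu (CNOT_conjTranspose hct) fun P hP => ?_
  obtain ⟨z, hz, a, b, rfl⟩ := exists_eq_smul_xShift_mul_zPhase hP
  have hsplit : CNOT n c t * (xShift a * zPhase b) * CNOT n c t =
      (CNOT n c t * xShift a * CNOT n c t) * (CNOT n c t * zPhase b * CNOT n c t) := by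
    simp only [mul_assoc, ← mul_assoc (CNOT n c t) (CNOT n c t), CNOT_mul_CNOT hct, one_mul]
  rw [Matrix.mul_smul, Matrix.smul_mul, hsplit, CNOT_mul_xShift_mul_CNOT hct,
    CNOT_mul_zPhase_mul_CNOT hct]
  exact smul_mem_pauliGroup hn hz (mul_mem (Submonoid.subset_closure (xShift_mem_pauliSet _))
    (Submonoid.subset_closure (zPhase_mem_pauliSet _)))

theorem Sn_mem_pauliNormalizer (hn : 0 < n) : Sn n ∈ pauliNormalizer n := by
  refine Submonoid.list_prod_mem _ fun V hV => ?_
  obtain ⟨j, -, rfl⟩ := List.mem_map.mp hV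
  exact CNOT_mem_pauliNormalizer hn (by simp [Fin.ext_iff])

theorem semiconjBy_CNOT_zPhase {c t : Fin n} (hct : c ≠ t) (b : Fin n → Fin 2) :
    SemiconjBy (CNOT n c t) (zPhase (cnotMap t c b)) (zPhase b) := by
  simpa only [CNOT_mul_zPhase_mul_CNOT hct] using
    semiconjBy_of_mul_self_eq_one (CNOT_mul_CNOT hct) (zPhase b)

theorem semiconjBy_CNOT_xShift {c t : Fin n} (hct : c ≠ t) (a : Fin n → Fin 2) :
    SemiconjBy (CNOT n c t) (xShift (cnotMap c t a)) (xShift a) := by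
  simpa only [CNOT_mul_xShift_mul_CNOT hct] using
    semiconjBy_of_mul_self_eq_one (CNOT_mul_CNOT hct) (xShift a)

/-- `Z⁽ʲ⁾Z⁽ʲ⁺¹⁾` after the first `i` gates of `S(n)` have been moved past it. -/
def zzStage (n j i : ℕ) : Fin n → Fin 2 :=
  fun q => if q.val = j ∨ (q.val = j + 1 ∧ i ≤ j) then 1 else 0

/-- `X^{⊗n}` after the first `i` gates of `S(n)` have been moved past it. -/
def xxStage (n i : ℕ) : Fin n → Fin 2 := fun q => if i ≤ q.val then 1 else 0

theorem cnotMap_zzStage (j : ℕ) (i : Fin (n - 1)) :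
    cnotMap ⟨i, by omega⟩ ⟨i + 1, by omega⟩ (zzStage n j i) = zzStage n j (i + 1) := by
  funext q
  simp only [cnotMap, zzStage, Pi.add_apply, Pi.single_apply, Fin.eq_mk_iff_val_eq]
  split_ifs <;> first | rfl | decide | omega

theorem cnotMap_xxStage (i : Fin (n - 1)) :
    cnotMap ⟨i + 1, by omega⟩ ⟨i, by omega⟩ (xxStage n i) = xxStage n (i + 1) := by
  funext q
  simp only [cnotMap, xxStage, Pi.add_apply, Pi.single_apply, Fin.eq_mk_iff_val_eq]
  split_ifs <;> first | rfl | decide | omega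

theorem semiconjBy_Sn_ZZ (j : Fin (n - 1)) :
    SemiconjBy (Sn n) (onQubit n Zg ⟨j, by omega⟩) (ZZ n j) := by
  have h : SemiconjBy (Sn n) (zPhase (zzStage n j (n - 1))) (zPhase (zzStage n j 0)) :=
    semiconjBy_list_prod_finRange _ (fun i => zPhase (zzStage n j i)) fun i => by
      simpa only [cnotMap_zzStage] using
        semiconjBy_CNOT_zPhase (c := ⟨i + 1, by omega⟩) (t := ⟨i, by omega⟩)
          (by simp [Fin.ext_iff]) (zzStage n j i)
  convert h using 2
  · rw [onQubit_Zg_eq_zPhase]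
    congr 1; funext q
    simp only [zzStage, Pi.single_apply, Fin.eq_mk_iff_val_eq]
    split_ifs <;> first | rfl | omega
  · rw [ZZ_eq_zPhase]
    congr 1; funext q
    simp only [zzStage, Pi.add_apply, Pi.single_apply, Fin.eq_mk_iff_val_eq]
    split_ifs <;> first | rfl | decide | omega

theorem semiconjBy_Sn_XXn (hn : 0 < n) :
    SemiconjBy (Sn n) (onQubit n Xg ⟨n - 1, by omega⟩) (XXn n) := by
  have h : SemiconjBy (Sn n) (xShift (xxStage n (n - 1))) (xShift (xxStage n 0)) :=
    semiconjBy_list_prod_finRange _ (fun i => xShift (xxStage n i)) fun i => by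
      simpa only [cnotMap_xxStage] using
        semiconjBy_CNOT_xShift (c := ⟨i + 1, by omega⟩) (t := ⟨i, by omega⟩)
          (by simp [Fin.ext_iff]) (xxStage n i)
  convert h using 2
  · rw [onQubit_Xg_eq_xShift]
    congr 1; funext q
    simp only [xxStage, Pi.single_apply, Fin.eq_mk_iff_val_eq]
    split_ifs <;> first | rfl | omega
  · rw [XXn_eq_xShift]
    rfl

theorem semiconjBy_Sn_mul_onQubit_Hg_Ug (hn : 0 < n) (g : Fin n → Fin 2) :
    SemiconjBy (Sn n * onQubit n Hg ⟨n - 1, by omega⟩) (zPhase g) (Ug n hn g) := by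
  set last : Fin n := ⟨n - 1, by omega⟩
  set ZP := ((List.finRange (n - 1)).map fun j =>
    onQubit n Zg (Fin.castLE (Nat.sub_le n 1) j) ^ (g (Fin.castLE (Nat.sub_le n 1) j)).val).prod
    with hZP
  have hS : SemiconjBy (Sn n) (ZP * onQubit n Xg last ^ (g last).val) (Ug n hn g) :=
    (SemiconjBy.list_prod_map _ fun j _ => (semiconjBy_Sn_ZZ j).pow_right _).mul_right
      ((semiconjBy_Sn_XXn hn).pow_right _)
  have hH : SemiconjBy (onQubit n Hg last) (ZP * onQubit n Zg last ^ (g last).val)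
      (ZP * onQubit n Xg last ^ (g last).val) := by
    refine SemiconjBy.mul_right (Commute.list_prod_right _ _ fun y hy => ?_)
      ((semiconjBy_onQubit semiconjBy_Hg_Zg_Xg last).pow_right _)
    obtain ⟨j, -, rfl⟩ := List.mem_map.mp hy
    exact (onQubit_commute Hg Zg (by simp [last, Fin.ext_iff]; omega)).pow_right _
  have hZ : ZP * onQubit n Zg last ^ (g last).val = zPhase g := by
    simp only [hZP, onQubit_Zg_pow, zPhase_list_sum, ← zPhase_add]
    exact congrArg zPhase (list_sum_single_castLE_add_single_last hn g)
  exact hZ ▸ hS.mul_left hH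

theorem Hg_apply (a b : Fin 2) : Hg a b = signChar (b * a) * Hg a 0 := by
  fin_cases a <;> fin_cases b <;> simp [Hg, signChar_apply]

theorem zPhase_mul_kronFam_Hg_apply_zero (g v : Fin n → Fin 2) :
    (zPhase g * kronFam n (fun _ => Hg)) v 0 = kronFam n (fun _ => Hg) v g := by
  simp only [zPhase, diagonal_mul, kronFam, dotProduct, signChar_sum, ← Finset.prod_mul_distrib]
  exact Finset.prod_congr rfl fun j _ => (Hg_apply (v j) (g j)).symm

theorem mulVec_ket (A : QMat n) (g : Fin n → Fin 2) : A *ᵥ ket n g = fun v => A v g := by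
  have : ket n g = Pi.single g 1 := by
    funext v; simp [ket, Pi.single_apply]
  rw [this, mulVec_single_one]
  rfl

theorem measurement_eq (hn : 0 < n) {C : QMat n} (hC : ∀ g, SemiconjBy C (zPhase g) (Ug n hn g))
    (d : (Fin n → Fin 2) → ℂ) :
    (fun v g => (Ug n hn g *ᵥ ((C * diagonal d * kronFam n (fun _ => Hg)) *ᵥ ket n 0)) v) =
      C * diagonal d * kronFam n (fun _ => Hg) := by
  ext v g
  have hcomm : zPhase g * diagonal d = diagonal d * zPhase g := by
    simp only [zPhase, diagonal_mul_diagonal, mul_comm]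
  have hfactor : Ug n hn g * (C * diagonal d * kronFam n (fun _ => Hg)) =
      C * diagonal d * (zPhase g * kronFam n (fun _ => Hg)) := by
    rw [← mul_assoc, ← mul_assoc, ← (hC g).eq, mul_assoc C, hcomm]
    simp only [mul_assoc]
  rw [mulVec_mulVec, hfactor, mulVec_ket]
  simp only [Matrix.mul_apply (M := C * diagonal d), zPhase_mul_kronFam_Hg_apply_zero]

end

open scoped Matrix in
/-- If the diagonal unitary `D` lies in level `C_k` (`k ≥ 2`) of the
`n`-qubit Clifford hierarchy, then the measurement unitary `M_ψ = Σ_g U_g |ψ⟩⟨g|` of the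
tetrahedral basis with fiducial `ψ = S(n) H⁽ⁿ⁾ D H^{⊗n} |0…0⟩` also lies in `C_k`. -/
theorem multiqubit_EJM_clifford_level (n k : ℕ) (hn : 2 ≤ n) (hk : 2 ≤ k)
    (D : QMat n)
    (hDdiag : ∃ d : (Fin n → Fin 2) → ℂ, D = Matrix.diagonal d)
    (hDCk : D ∈ Clifford n k)
    (ψ : QVec n)
    (hψ : ψ = (Sn n * onQubit n Hg ⟨n - 1, by omega⟩ * D *
        kronFam n (fun _ => Hg)).mulVec (ket n (fun _ => 0)))
    (M : QMat n)
    (hM : M = fun v g => ((Ug n (by omega) g).mulVec ψ) v) :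
    M ∈ Clifford n k := by
  obtain ⟨d, rfl⟩ := hDdiag
  obtain ⟨k, rfl⟩ := Nat.exists_eq_add_of_le' hk
  have hn0 : 0 < n := by omega
  have hM' : M = Sn n * onQubit n Hg ⟨n - 1, by omega⟩ * diagonal d *
      kronFam n (fun _ => Hg) := by
    rw [hM, hψ]
    exact measurement_eq hn0 (semiconjBy_Sn_mul_onQubit_Hg_Ug hn0) d
  have hSH : Sn n * onQubit n Hg ⟨n - 1, by omega⟩ ∈ pauliNormalizer n :=
    mul_mem (Sn_mem_pauliNormalizer hn0) (onQubit_Hg_mem_pauliNormalizer hn0 _)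
  have hH : kronFam n (fun _ => Hg) ∈ pauliNormalizer n :=
    kronFam_mem_pauliNormalizer hn0 fun _ => Or.inl rfl
  rw [hM']
  exact mul_mem_clifford_right (mul_mem_clifford_left hSH hDCk) hH
end

section
/- Fix n ≥ 2. Conjugation by S(n) maps the subgroup of 2^n×2^n unitaries generated by Z^{(1)}, …, Z^{(n−1)}, X^{(n)} onto G^{(n)}_tetra; that is, { S(n) U S(n)⁻¹ : U ∈ ⟨Z^{(1)}, …, Z^{(n−1)}, X^{(n)}⟩ } = G^{(n)}_tetra. In particular these two groups are isomorphic. -/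
/-!
Every gate involved is a monomial matrix (a map of basis states `|w⟩ ↦ ε w |π w⟩`), so
commutation relations among them reduce to identities between maps of bit strings. Conjugation
by `CNOT_{c→t}` fixes `Z^{(i)}` for `i ≠ t`, sends `Z^{(t)}` to `Z^{(t)} Z^{(c)}`, and sends the
`X`-string `X^a` to `X^{a + a_c e_t}`. Pushing `Z^{(j)}` through the ladder
`S(n) = CNOT_{2→1} ⋯ CNOT_{n→n−1}` therefore picks up `Z^{(j+1)}` at the single gate targeting
qubit `j`, while `X^{(n)}` spreads one qubit further at each gate and arrives as `X^{⊗n}`.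
So conjugation by `S(n)`, an automorphism of the matrix monoid, maps the generators of
`⟨Z^{(1)}, …, Z^{(n−1)}, X^{(n)}⟩` onto those of `G_tetra`, hence the generated groups onto each
other.
-/

open Matrix Complex

/-- The group generated by `Z⁽¹⁾, …, Z⁽ⁿ⁻¹⁾, X⁽ⁿ⁾` (generators are involutions, so the
multiplicative closure is a group). -/
def Glocal (n : ℕ) (hn : 0 < n) : Submonoid (QMat n) :=
  Submonoid.closure
    ({ M | ∃ j : Fin (n - 1), M = onQubit n Zg (Fin.castLE (Nat.sub_le n 1) j) } ∪
      {onQubit n Xg ⟨n - 1, by omega⟩})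

open Function

section MonomialMatrix

variable {ι R : Type*} [DecidableEq ι]

def monomialMatrix [Zero R] (π : ι → ι) (ε : ι → R) : Matrix ι ι R :=
  Matrix.of fun v w => if v = π w then ε w else 0

theorem monomialMatrix_mul [Fintype ι] [NonUnitalNonAssocSemiring R] (π₁ π₂ : ι → ι)
    (ε₁ ε₂ : ι → R) :
    monomialMatrix π₁ ε₁ * monomialMatrix π₂ ε₂ =
      monomialMatrix (π₁ ∘ π₂) fun w => ε₁ (π₂ w) * ε₂ w := by
  ext v w
  simp [monomialMatrix, Matrix.mul_apply, mul_ite, ite_mul, Finset.sum_ite_eq']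

theorem monomialMatrix_id_one [Zero R] [One R] : monomialMatrix id (fun _ : ι => (1 : R)) = 1 := by
  ext v w
  simp [monomialMatrix, Matrix.one_apply]

variable [Fintype ι] [NonAssocSemiring R]

theorem monomialMatrix_mul_self_of_involutive {π : ι → ι} (hπ : Involutive π) :
    monomialMatrix π (fun _ => (1 : R)) * monomialMatrix π (fun _ => 1) = 1 := by
  rw [monomialMatrix_mul, hπ.comp_self, ← monomialMatrix_id_one]
  simp

theorem monomialMatrix_mul_comm_of_comp_eq {π τ τ' : ι → ι} (h : π ∘ τ = τ' ∘ π) :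
    monomialMatrix π (fun _ => (1 : R)) * monomialMatrix τ (fun _ => 1) =
      monomialMatrix τ' (fun _ => 1) * monomialMatrix π (fun _ => 1) := by
  simp [monomialMatrix_mul, h]

theorem monomialMatrix_mul_diagonal_eq {π : ι → ι} {ε ε' : ι → R} (h : ∀ w, ε w = ε' (π w)) :
    monomialMatrix π (fun _ => (1 : R)) * monomialMatrix id ε =
      monomialMatrix id ε' * monomialMatrix π (fun _ => 1) := by
  simp [monomialMatrix_mul, h]

end MonomialMatrix

theorem prod_ofFn_mul_eq_mul_prod_ofFn {M : Type*} [Monoid M] {m : ℕ} (C : Fin m → M)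
    (B : ℕ → M) (h : ∀ k : Fin m, C k * B (k + 1) = B k * C k) :
    (List.ofFn C).prod * B m = B 0 * (List.ofFn C).prod := by
  induction m with
  | zero => simp
  | succ m ih =>
    have hlast : C (Fin.last m) * B (m + 1) = B m * C (Fin.last m) := h (Fin.last m)
    rw [List.ofFn_succ', List.prod_concat, mul_assoc, hlast, ← mul_assoc,
      ih _ fun k => h k.castSucc, mul_assoc]

theorem Fin.two_add_add_self (a b : Fin 2) : a + b + b = a := by
  fin_cases a <;> fin_cases b <;> rfl

section Qubits

variable {n : ℕ}

def bitSign (b : Fin 2) : ℂ := if b = 0 then 1 else -1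

theorem bitSign_add (a b : Fin 2) : bitSign (a + b) = bitSign a * bitSign b := by
  fin_cases a <;> fin_cases b <;> simp [bitSign]

theorem bitSign_mul_self (a : Fin 2) : bitSign a * bitSign a = 1 := by
  fin_cases a <;> simp [bitSign]

theorem Zg_eq_monomialMatrix : Zg = monomialMatrix id bitSign := by
  ext a b
  fin_cases a <;> fin_cases b <;> simp [Zg, monomialMatrix, bitSign]

theorem Xg_eq_monomialMatrix : Xg = monomialMatrix (· + 1) fun _ => 1 := by
  ext a b
  fin_cases a <;> fin_cases b <;> simp [Xg, monomialMatrix, Fin.ext_iff]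

theorem kronFam_monomialMatrix (σ : Fin n → Fin 2 → Fin 2) (ε : Fin n → Fin 2 → ℂ) :
    kronFam n (fun j => monomialMatrix (σ j) (ε j)) =
      monomialMatrix (fun w j => σ j (w j)) fun w => ∏ j, ε j (w j) := by
  ext v w
  simp only [kronFam, monomialMatrix, Matrix.of_apply]
  split_ifs with h
  · exact Finset.prod_congr rfl fun j _ => if_pos (congrFun h j)
  · obtain ⟨j, hj⟩ := Function.ne_iff.mp h
    exact Finset.prod_eq_zero (Finset.mem_univ j) (if_neg hj)

theorem onQubit_Zg (i : Fin n) : onQubit n Zg i = monomialMatrix id fun w => bitSign (w i) := by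
  have h : onQubit n Zg i =
      kronFam n fun j => monomialMatrix id (if j = i then bitSign else fun _ => 1) := by
    rw [onQubit]
    congr! 2 with j
    split_ifs <;> simp [Zg_eq_monomialMatrix, monomialMatrix_id_one]
  rw [h, kronFam_monomialMatrix]
  congr 1
  ext w
  simp [ite_apply]

/-- `X^a`: the tensor product of `X` on the qubits `j` with `a j = 1`. -/
def pauliXString (n : ℕ) (a : Fin n → Fin 2) : QMat n := monomialMatrix (· + a) fun _ => 1

theorem onQubit_Xg (i : Fin n) : onQubit n Xg i = pauliXString n (Pi.single i 1) := by
  have h : onQubit n Xg i =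
      kronFam n fun j => monomialMatrix (if j = i then (· + 1) else id) fun _ => 1 := by
    rw [onQubit]
    congr! 2 with j
    split_ifs <;> simp [Xg_eq_monomialMatrix, monomialMatrix_id_one]
  rw [h, kronFam_monomialMatrix, pauliXString]
  congr 1
  · ext w j
    by_cases hj : j = i <;> simp [hj]
  · simp

theorem XXn_eq_pauliXString : XXn n = pauliXString n 1 := by
  rw [XXn, Xg_eq_monomialMatrix, kronFam_monomialMatrix, pauliXString]
  simp only [Finset.prod_const_one]
  rfl

theorem CNOT_eq_monomialMatrix (c t : Fin n) :
    CNOT n c t = monomialMatrix (fun w => update w t (w t + w c)) fun _ => 1 :=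
  rfl

theorem CNOT_mul_self {c t : Fin n} (h : c ≠ t) : CNOT n c t * CNOT n c t = 1 := by
  refine monomialMatrix_mul_self_of_involutive fun w => ?_
  ext j
  by_cases hj : j = t
  · subst hj; simp [update_of_ne h, Fin.two_add_add_self]
  · simp [hj]

theorem commute_CNOT_onQubit_Zg {c t i : Fin n} (h : i ≠ t) :
    Commute (CNOT n c t) (onQubit n Zg i) := by
  rw [CNOT_eq_monomialMatrix, onQubit_Zg]
  exact monomialMatrix_mul_diagonal_eq fun w => by simp [update_of_ne h]

theorem CNOT_mul_onQubit_Zg_target {c t : Fin n} (h : c ≠ t) :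
    CNOT n c t * onQubit n Zg t = onQubit n Zg t * onQubit n Zg c * CNOT n c t := by
  rw [CNOT_eq_monomialMatrix, onQubit_Zg, onQubit_Zg, monomialMatrix_mul id id, id_comp]
  refine monomialMatrix_mul_diagonal_eq fun w => ?_
  simp [update_of_ne h, bitSign_add, mul_assoc, bitSign_mul_self]

theorem CNOT_mul_pauliXString (c t : Fin n) (a : Fin n → Fin 2) :
    CNOT n c t * pauliXString n a = pauliXString n (update a t (a t + a c)) * CNOT n c t := by
  refine monomialMatrix_mul_comm_of_comp_eq (funext fun w => funext fun j => ?_)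
  by_cases hj : j = t
  · subst hj; simp [add_add_add_comm]
  · simp [hj]

theorem isUnit_Sn : IsUnit (Sn n) := by
  refine List.prod_isUnit fun M hM => ?_
  obtain ⟨k, -, rfl⟩ := List.mem_map.mp hM
  have h := CNOT_mul_self (n := n) (c := ⟨k + 1, by omega⟩) (t := ⟨k, by omega⟩)
    (by simp [Fin.ext_iff])
  exact ⟨⟨_, _, h, h⟩, rfl⟩

theorem Sn_mul_eq_mul_Sn (B : ℕ → QMat n)
    (h : ∀ k (hk : k + 1 < n), CNOT n ⟨k + 1, hk⟩ ⟨k, by omega⟩ * B (k + 1) =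
      B k * CNOT n ⟨k + 1, hk⟩ ⟨k, by omega⟩) :
    Sn n * B (n - 1) = B 0 * Sn n := by
  rw [Sn, ← List.ofFn_eq_map]
  exact prod_ofFn_mul_eq_mul_prod_ofFn _ B fun k => h k (by omega)

theorem Sn_mul_onQubit_Zg (j : Fin (n - 1)) :
    Sn n * onQubit n Zg (Fin.castLE (Nat.sub_le n 1) j) = ZZ n j * Sn n := by
  obtain ⟨j, hj⟩ := j
  have key := Sn_mul_eq_mul_Sn
    (fun k => if k ≤ j then ZZ n ⟨j, hj⟩ else onQubit n Zg ⟨j, by omega⟩) ?_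
  · simpa [show ¬n - 1 ≤ j by omega] using key
  intro k hk
  rcases lt_trichotomy k j with hlt | rfl | hgt
  · simp only [if_pos hlt.le, if_pos (show k + 1 ≤ j by omega)]
    refine ((commute_CNOT_onQubit_Zg ?_).mul_right (commute_CNOT_onQubit_Zg ?_)).eq <;>
      simp [Fin.ext_iff] <;> omega
  · simp only [le_refl, if_pos, show ¬k + 1 ≤ k by omega, if_false]
    exact CNOT_mul_onQubit_Zg_target (by simp)
  · simp only [if_neg (show ¬k ≤ j by omega), if_neg (show ¬k + 1 ≤ j by omega)]
    exact (commute_CNOT_onQubit_Zg (by simp [Fin.ext_iff]; omega)).eq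

theorem Sn_mul_onQubit_Xg_last (hn : 0 < n) :
    Sn n * onQubit n Xg ⟨n - 1, by omega⟩ = XXn n * Sn n := by
  let a : ℕ → Fin n → Fin 2 := fun k i => if k ≤ i.1 then 1 else 0
  have ha_last : a (n - 1) = Pi.single ⟨n - 1, by omega⟩ 1 := by
    ext i
    by_cases hi : i = ⟨n - 1, by omega⟩
    · simp [a, hi]
    · have : ¬n - 1 ≤ i.1 := fun h => hi (Fin.ext (show i.1 = n - 1 by omega))
      simp [a, hi, this]
  have ha_zero : a 0 = 1 := by ext i; simp [a]
  have key := Sn_mul_eq_mul_Sn (fun k => pauliXString n (a k)) fun k hk => by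
    rw [CNOT_mul_pauliXString]
    congr 2
    ext i
    by_cases hi : i = ⟨k, by omega⟩
    · subst hi; simp [a]
    · have hik : i.1 ≠ k := fun h => hi (Fin.ext h)
      simp [a, hi, show k < i.1 ↔ k ≤ i.1 by omega]
  rwa [ha_last, ha_zero, ← onQubit_Xg, ← XXn_eq_pauliXString] at key

end Qubits

/-- Conjugation by `S(n)` maps `⟨Z⁽¹⁾, …, Z⁽ⁿ⁻¹⁾, X⁽ⁿ⁾⟩` onto
`G⁽ⁿ⁾_tetra`; in particular the two groups are isomorphic. -/
theorem Sn_conjugation_maps_local_group_onto_Gtetra (n : ℕ) (hn : 2 ≤ n) :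
    { M : QMat n | ∃ U ∈ Glocal n (by omega), M = Sn n * U * (Sn n)⁻¹ } =
      (Gtetra n : Set (QMat n)) ∧
    Nonempty (Glocal n (by omega) ≃* Gtetra n) := by
  obtain ⟨u, hu⟩ := isUnit_Sn (n := n)
  let e := MulDistribMulAction.toMulEquiv (QMat n) (ConjAct.toConjAct u)
  have he : ∀ A, e A = Sn n * A * (Sn n)⁻¹ := fun A => by
    simp [e, ConjAct.units_smul_def, ← hu, Matrix.coe_units_inv]
  have he_of_mul_eq : ∀ A B, Sn n * A = B * Sn n → e A = B := fun A B h => by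
    rw [he, h, ← hu, ← Matrix.coe_units_inv, Units.mul_inv_cancel_right]
  have hmap : (Glocal n (by omega)).map e.toMonoidHom = Gtetra n := by
    rw [Glocal, Gtetra, MonoidHom.map_mclosure, Set.image_union, Set.image_singleton]
    congr 2
    · ext M
      constructor
      · rintro ⟨_, ⟨j, rfl⟩, rfl⟩
        exact ⟨j, he_of_mul_eq _ _ (Sn_mul_onQubit_Zg j)⟩
      · rintro ⟨j, rfl⟩
        exact ⟨_, ⟨j, rfl⟩, he_of_mul_eq _ _ (Sn_mul_onQubit_Zg j)⟩
    · exact congrArg _ (he_of_mul_eq _ _ (Sn_mul_onQubit_Xg_last (by omega)))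
  refine ⟨?_, ⟨(e.submonoidMap _).trans (MulEquiv.submonoidCongr hmap)⟩⟩
  rw [← hmap, Submonoid.coe_map]
  ext M
  simp [he, eq_comm]
end
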